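/- Let E be a finite-dimensional real vector space with a nondegenerate symmetric bilinear form ⟨·,·⟩, and let G ∈ End(E) satisfy G² = Id and ⟨Gu,Gv⟩ = ⟨u,v⟩ for all u,v ∈ E; denote by E₊ and E₋ the (+1)- and (−1)-eigenspaces of G and set n := dim E₋. Let ℱ ∈ End(E) be ⟨·,·⟩-skew-symmetric (⟨ℱu,v⟩ = −⟨u,ℱv⟩ for all u,v), commute with G, have kernel equal to the line spanned by a vector u₀ with ⟨u₀,u₀⟩ = (−1)ⁿ, and satisfy ℱ² = −Id + (−1)ⁿ⟨·,u₀⟩u₀. Then G u₀ = (−1)ⁿ u₀; that is, u₀ ∈ E₊ if n is even and u₀ ∈ E₋ if n is odd. -/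
import Mathlib

lemma even_of_sq_neg_one {V : Type*} [AddCommGroup V] [Module ℝ V] [FiniteDimensional ℝ V]
    (J : V →ₗ[ℝ] V) (hJ : ∀ v, J (J v) = -v) : Even (Module.finrank ℝ V) := by
  have hcomp : J ∘ₗ J = (-1 : ℝ) • LinearMap.id := by
    ext v; simp [hJ v]
  have hdet : LinearMap.det J * LinearMap.det J = (-1 : ℝ) ^ Module.finrank ℝ V := by
    rw [← LinearMap.det_comp, hcomp, LinearMap.det_smul, LinearMap.det_id, mul_one]
  rcases Nat.even_or_odd (Module.finrank ℝ V) with h | h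
  · exact h
  · exfalso
    rw [h.neg_one_pow] at hdet
    nlinarith [sq_nonneg (LinearMap.det J)]

theorem stmt_0 {E : Type*} [AddCommGroup E] [Module ℝ E] [FiniteDimensional ℝ E]
    (B : LinearMap.BilinForm ℝ E)
    (hBsymm : ∀ u v, B u v = B v u)
    (hBnd : ∀ u, (∀ v, B u v = 0) → u = 0)
    (G : E →ₗ[ℝ] E)
    (hG2 : ∀ u, G (G u) = u)
    (hGorth : ∀ u v, B (G u) (G v) = B u v)
    (n : ℕ)
    (hn : n = Module.finrank ℝ (LinearMap.ker (G + (LinearMap.id : E →ₗ[ℝ] E))))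
    (F : E →ₗ[ℝ] E)
    (hFskew : ∀ u v, B (F u) v = - B u (F v))
    (hFG : ∀ u, F (G u) = G (F u))
    (u₀ : E)
    (hker : LinearMap.ker F = Submodule.span ℝ {u₀})
    (hu₀ : B u₀ u₀ = (-1 : ℝ) ^ n)
    (hF2 : ∀ v, F (F v) = -v + ((-1 : ℝ) ^ n * B v u₀) • u₀) :
    G u₀ = ((-1 : ℝ) ^ n) • u₀ := by
  have hu0ne : u₀ ≠ 0 := by
    intro h
    rw [h] at hu₀
    simp at hu₀
    exact pow_ne_zero n (by norm_num : (-1:ℝ) ≠ 0) hu₀.symm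
  set Em := LinearMap.ker (G + (LinearMap.id : E →ₗ[ℝ] E)) with hEmdef
  have hEm : ∀ v, v ∈ Em ↔ G v = -v := by
    intro v
    rw [hEmdef, LinearMap.mem_ker]
    simp [add_eq_zero_iff_eq_neg]
  have hFu0 : F u₀ = 0 := by
    have : u₀ ∈ LinearMap.ker F := by
      rw [hker]; exact Submodule.mem_span_singleton_self u₀
    exact LinearMap.mem_ker.mp this
  have hBFu0 : ∀ v, B (F v) u₀ = 0 := by
    intro v
    rw [hFskew, hFu0]
    simp
  obtain ⟨c, hc⟩ : ∃ c : ℝ, G u₀ = c • u₀ := by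
    have hm : G u₀ ∈ LinearMap.ker F := by
      rw [LinearMap.mem_ker, hFG, hFu0, map_zero]
    rw [hker, Submodule.mem_span_singleton] at hm
    obtain ⟨a, ha⟩ := hm
    exact ⟨a, ha.symm⟩
  have hc2 : c * c = 1 := by
    have h1 : (c * c) • u₀ = u₀ := by
      have h := hG2 u₀
      rw [hc, map_smul, hc, smul_smul] at h
      exact h
    have h2 : (c * c - 1) • u₀ = 0 := by
      rw [sub_smul, one_smul, h1, sub_self]
    have := (smul_eq_zero.mp h2).resolve_right hu0ne
    linarith
  have hFEm : ∀ v ∈ Em, F v ∈ Em := by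
    intro v hv
    rw [hEm, ← hFG, (hEm v).mp hv, map_neg]
  rcases mul_self_eq_one_iff.mp hc2 with hc1 | hc1
  · -- c = 1 : show n even
    have hperp : ∀ v ∈ Em, B v u₀ = 0 := by
      intro v hv
      have h1 := hGorth v u₀
      rw [(hEm v).mp hv, hc, hc1, one_smul, map_neg, LinearMap.neg_apply] at h1
      linarith
    set J := F.restrict hFEm with hJdef
    have hJ : ∀ w : Em, J (J w) = -w := by
      intro w
      apply Subtype.ext
      have h1 : ((J (J w) : Em) : E) = F (F (w : E)) := by
        simp [hJdef, LinearMap.restrict_apply]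
      rw [h1, hF2, hperp (w : E) w.2]
      simp
    have heven : Even n := hn ▸ even_of_sq_neg_one J hJ
    rw [hc, hc1, heven.neg_one_pow]
  · -- c = -1 : show n odd
    have hu0Em : u₀ ∈ Em := by
      rw [hEm, hc, hc1]
      simp
    set S := Em ⊓ LinearMap.ker (B.flip u₀) with hSdef
    have hSmem : ∀ v, v ∈ S ↔ v ∈ Em ∧ B v u₀ = 0 := by
      intro v
      simp [hSdef, Submodule.mem_inf, LinearMap.mem_ker]
    have hFS : ∀ v ∈ S, F v ∈ S := by
      intro v hv
      rw [hSmem]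
      exact ⟨hFEm v ((hSmem v).mp hv).1, hBFu0 v⟩
    set J := F.restrict hFS with hJdef
    have hJ : ∀ w : S, J (J w) = -w := by
      intro w
      apply Subtype.ext
      have h1 : ((J (J w) : S) : E) = F (F (w : E)) := by
        simp [hJdef, LinearMap.restrict_apply]
      rw [h1, hF2, ((hSmem (w : E)).mp w.2).2]
      simp
    have heven : Even (Module.finrank ℝ S) := even_of_sq_neg_one J hJ
    have hpow : (-1 : ℝ) ^ n * (-1 : ℝ) ^ n = 1 := by
      rw [← pow_add, Even.neg_one_pow ⟨n, rfl⟩]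
    have hsup : Submodule.span ℝ {u₀} ⊔ S = Em := by
      apply le_antisymm
      · apply sup_le
        · rw [Submodule.span_le, Set.singleton_subset_iff]
          exact hu0Em
        · exact inf_le_left
      · intro v hv
        set a := (-1 : ℝ) ^ n * B v u₀ with hadef
        have hw : v - a • u₀ ∈ S := by
          rw [hSmem]
          constructor
          · exact Submodule.sub_mem _ hv (Submodule.smul_mem _ _ hu0Em)
          · rw [map_sub, map_smul, LinearMap.sub_apply, LinearMap.smul_apply, hu₀,
              smul_eq_mul, hadef]
            linear_combination (-(B v) u₀) * hpow
        have : v = a • u₀ + (v - a • u₀) := by abel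
        rw [this]
        exact Submodule.add_mem _
          (Submodule.mem_sup_left (Submodule.smul_mem _ _ (Submodule.mem_span_singleton_self u₀)))
          (Submodule.mem_sup_right hw)
    have hdisj : Submodule.span ℝ {u₀} ⊓ S = ⊥ := by
      rw [eq_bot_iff]
      intro x hx
      obtain ⟨a, ha⟩ := Submodule.mem_span_singleton.mp hx.1
      have hx2 := ((hSmem x).mp hx.2).2
      rw [← ha, map_smul, LinearMap.smul_apply, hu₀, smul_eq_mul] at hx2
      have ha0 : a = 0 := by
        rcases mul_eq_zero.mp hx2 with h | h
        · exact h
        · exact absurd h (pow_ne_zero n (by norm_num))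
      simp [← ha, ha0]
    have hrank := Submodule.finrank_sup_add_finrank_inf_eq (Submodule.span ℝ {u₀}) S
    rw [hsup, hdisj, finrank_bot, finrank_span_singleton hu0ne, add_zero] at hrank
    have hodd : Odd n := by
      rw [hn, hrank]
      obtain ⟨k, hk⟩ := heven
      exact ⟨k, by omega⟩
    rw [hc, hc1, hodd.neg_one_pow]
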